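/- Let U ⊸ X ⊸ (Y_s, Y_c) where receiver Y_s is less noisy than Y_c, meaning I(U';Y_s) ≥ I(U';Y_c) for every random variable U' with U' ⊸ X ⊸ (Y_s,Y_c). Then for a memoryless channel used n times without feedback, and any random variable M with M ⊸ X^n ⊸ (Y_s^n, Y_c^n): I(Y_s^{i−1}; Y_{c,i} | M) ≥ I(Y_c^{i−1}; Y_{c,i} | M) for all 1 ≤ i ≤ n. -/

import Mathlib

open Finset

/-- Shannon entropy (in bits) of the random variable `X` on the finite probability
space `(Ω, p)`, with the convention `0 · log 0 = 0`. -/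
noncomputable def ent {Ω α : Type*} [Fintype Ω] [Fintype α] [DecidableEq α]
    (p : Ω → ℝ) (X : Ω → α) : ℝ :=
  -∑ x : α, (∑ ω ∈ univ.filter (fun ω => X ω = x), p ω) *
      Real.logb 2 (∑ ω ∈ univ.filter (fun ω => X ω = x), p ω)

/-- Mutual information `I(X;Y) = H(X) + H(Y) − H(X,Y)` (in bits). -/
noncomputable def mutInf {Ω α β : Type*} [Fintype Ω] [Fintype α] [DecidableEq α]
    [Fintype β] [DecidableEq β] (p : Ω → ℝ) (X : Ω → α) (Y : Ω → β) : ℝ :=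
  ent p X + ent p Y - ent p (fun ω => (X ω, Y ω))

/-- Conditional mutual information
`I(X;Y|Z) = H(X,Z) + H(Y,Z) − H(X,Y,Z) − H(Z)` (in bits). -/
noncomputable def condMutInf {Ω α β γ : Type*} [Fintype Ω] [Fintype α] [DecidableEq α]
    [Fintype β] [DecidableEq β] [Fintype γ] [DecidableEq γ]
    (p : Ω → ℝ) (X : Ω → α) (Y : Ω → β) (Z : Ω → γ) : ℝ :=
  ent p (fun ω => (X ω, Z ω)) + ent p (fun ω => (Y ω, Z ω))
    - ent p (fun ω => (X ω, Y ω, Z ω)) - ent p Z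

/-- `p` is a probability mass function on the finite sample space `Ω`. -/
def IsProb {Ω : Type*} [Fintype Ω] (p : Ω → ℝ) : Prop :=
  (∀ ω, 0 ≤ p ω) ∧ ∑ ω, p ω = 1

/-!
Interpolate between `Y_c^{i-1}` and `Y_s^{i-1}` through the hybrids
`H_k = (Y_{s,1}, …, Y_{s,k}, Y_{c,k+1}, …, Y_{c,i-1})`. If `W` denotes the letters of `H_k` other
than the `(k+1)`-st, the chain rule gives
`I(H_{k+1}; Y_{c,i} | M) - I(H_k; Y_{c,i} | M)
  = I(Y_{s,k+1}; Y_{c,i} | W, M) - I(Y_{c,k+1}; Y_{c,i} | W, M)`.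
As the channel is memoryless and used without feedback, given `(W, M) = (w, m)` the outputs at
time `k+1` are produced from `X_{k+1}` by one use of the channel, independently of `U = Y_{c,i}`,
so `U ⊸ X_{k+1} ⊸ (Y_{s,k+1}, Y_{c,k+1})` and less-noisiness makes every difference nonnegative.
-/

namespace InfoTheory

section Law

variable {Ω Ω' α β γ : Type*} [Fintype Ω] [Fintype Ω'] [DecidableEq α] [DecidableEq β]
  [DecidableEq γ]

noncomputable def law (p : Ω → ℝ) (X : Ω → α) (a : α) : ℝ :=
  ∑ ω ∈ univ.filter (fun ω => X ω = a), p ω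

lemma ent_eq_law [Fintype α] (p : Ω → ℝ) (X : Ω → α) :
    ent p X = -∑ a, law p X a * Real.logb 2 (law p X a) := rfl

lemma law_eq_sum_ite (p : Ω → ℝ) (X : Ω → α) (a : α) :
    law p X a = ∑ ω, if X ω = a then p ω else 0 :=
  sum_filter _ _

lemma law_nonneg {p : Ω → ℝ} (hp : ∀ ω, 0 ≤ p ω) (X : Ω → α) (a : α) : 0 ≤ law p X a :=
  sum_nonneg fun ω _ => hp ω

lemma sum_law [Fintype α] (p : Ω → ℝ) (X : Ω → α) : ∑ a, law p X a = ∑ ω, p ω := by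
  simp only [law_eq_sum_ite]
  rw [sum_comm]
  simp

lemma law_self [DecidableEq Ω] (p : Ω → ℝ) (a : Ω) : law p (fun ω => ω) a = p a := by
  simp [law_eq_sum_ite]

lemma law_comp [Fintype α] (p : Ω → ℝ) (X : Ω → α) (f : α → β) (b : β) :
    law p (fun ω => f (X ω)) b = ∑ a with f a = b, law p X a := by
  simp only [law_eq_sum_ite]
  rw [sum_comm]
  refine sum_congr rfl fun ω _ => ?_
  simp

lemma law_comp_injective [Fintype α] (p : Ω → ℝ) (X : Ω → α) {e : α → β}
    (he : Function.Injective e) (a : α) : law p (fun ω => e (X ω)) (e a) = law p X a := by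
  simp [law_comp, he.eq_iff, filter_eq']

lemma law_fst [Fintype β] (p : Ω → ℝ) (X : Ω → α) (Y : Ω → β) (a : α) :
    law p X a = ∑ b, law p (fun ω => (X ω, Y ω)) (a, b) := by
  simp only [law_eq_sum_ite]
  rw [sum_comm]
  refine sum_congr rfl fun ω _ => ?_
  simp [Prod.ext_iff, ite_and]

lemma law_snd [Fintype α] (p : Ω → ℝ) (X : Ω → α) (Y : Ω → β) (b : β) :
    law p Y b = ∑ a, law p (fun ω => (X ω, Y ω)) (a, b) := by
  simp only [law_eq_sum_ite]
  rw [sum_comm]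
  refine sum_congr rfl fun ω _ => ?_
  simp [Prod.ext_iff, ite_and]

lemma ent_comp_of_law_eq [Fintype α] [Fintype β] {p : Ω → ℝ} {p' : Ω' → ℝ} {X : Ω → α}
    {X' : Ω' → α}
    (h : ∀ a, law p X a = law p' X' a) (f : α → β) :
    ent p (fun ω => f (X ω)) = ent p' (fun ω => f (X' ω)) := by
  simp only [ent_eq_law, law_comp, h]

lemma ent_comp_injective [Fintype α] [Fintype β] (p : Ω → ℝ) (X : Ω → α) {e : α → β}
    (he : Function.Injective e) :
    ent p (fun ω => e (X ω)) = ent p X := by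
  simp only [ent_eq_law, neg_inj]
  refine (Fintype.sum_of_injective e he _ _ (fun b hb => ?_) fun a => ?_).symm
  · have : law p (fun ω => e (X ω)) b = 0 := by
      simp only [law_comp]
      exact sum_eq_zero fun a ha => absurd ⟨a, (mem_filter.1 ha).2⟩ hb
    simp [this]
  · rw [law_comp_injective p X he]

lemma mutInf_comp_of_law_eq [Fintype α] [Fintype β] [Fintype γ] {p : Ω → ℝ} {p' : Ω' → ℝ}
    {X : Ω → α} {X' : Ω' → α}
    (h : ∀ a, law p X a = law p' X' a) (f : α → β) (g : α → γ) :
    mutInf p (fun ω => f (X ω)) (fun ω => g (X ω))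
      = mutInf p' (fun ω => f (X' ω)) (fun ω => g (X' ω)) := by
  unfold mutInf
  rw [ent_comp_of_law_eq h f, ent_comp_of_law_eq h g,
    ent_comp_of_law_eq h fun a => (f a, g a)]

lemma mutInf_comm [Fintype α] [Fintype β] (p : Ω → ℝ) (X : Ω → α) (Y : Ω → β) :
    mutInf p X Y = mutInf p Y X := by
  unfold mutInf
  rw [← ent_comp_injective p (fun ω => (X ω, Y ω)) Prod.swap_injective]
  simp only [Prod.swap_prod_mk]
  ring

lemma mutInf_comp_injective_left [Fintype α] [Fintype β] [Fintype γ] (p : Ω → ℝ) (X : Ω → α)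
    (Y : Ω → β) {e : α → γ} (he : Function.Injective e) :
    mutInf p (fun ω => e (X ω)) Y = mutInf p X Y := by
  unfold mutInf
  rw [ent_comp_injective p X he,
    ← ent_comp_injective p (fun ω => (X ω, Y ω)) (he.prodMap Function.injective_id)]
  rfl

end Law

section Conditional

variable {Ω α β γ δ : Type*} [Fintype Ω] [DecidableEq α] [DecidableEq β] [DecidableEq γ]
  [DecidableEq δ]

lemma condMutInf_comp_injective_left [Fintype α] [Fintype β] [Fintype γ] [Fintype δ]
    (p : Ω → ℝ) (X : Ω → α) (Y : Ω → β) (Z : Ω → γ)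
    {e : α → δ} (he : Function.Injective e) :
    condMutInf p (fun ω => e (X ω)) Y Z = condMutInf p X Y Z := by
  unfold condMutInf
  have hXZ := ent_comp_injective p (fun ω => (X ω, Z ω)) (he.prodMap Function.injective_id)
  have hXYZ := ent_comp_injective p (fun ω => (X ω, Y ω, Z ω))
    (he.prodMap Function.injective_id)
  simp only [Prod.map_apply, id] at hXZ hXYZ
  rw [hXZ, hXYZ]

lemma condMutInf_pair_left [Fintype α] [Fintype β] [Fintype γ] [Fintype δ]
    (p : Ω → ℝ) (A : Ω → α) (B : Ω → δ) (Y : Ω → β) (Z : Ω → γ) :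
    condMutInf p (fun ω => (A ω, B ω)) Y Z
      = condMutInf p B Y Z + condMutInf p A Y (fun ω => (B ω, Z ω)) := by
  unfold condMutInf
  have h₁ := ent_comp_injective p (fun ω => (Y ω, B ω, Z ω))
    (e := fun x => (x.2.1, x.1, x.2.2)) fun x y h => by simp_all [Prod.ext_iff]
  have h₂ := ent_comp_injective p (fun ω => (A ω, Y ω, B ω, Z ω))
    (e := fun x => ((x.1, x.2.2.1), x.2.1, x.2.2.2)) fun x y h => by simp_all [Prod.ext_iff]
  have h₃ := ent_comp_injective p (fun ω => (A ω, B ω, Z ω))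
    (e := fun x => ((x.1, x.2.1), x.2.2)) fun x y h => by simp_all [Prod.ext_iff]
  rw [h₁, h₂, h₃]
  ring

noncomputable def condPmf (p : Ω → ℝ) (Z : Ω → γ) (z : γ) (ω : Ω) : ℝ :=
  if Z ω = z then p ω / law p Z z else 0

lemma law_condPmf (p : Ω → ℝ) (Z : Ω → γ) (z : γ) (X : Ω → α) (a : α) :
    law (condPmf p Z z) X a = law p (fun ω => (X ω, Z ω)) (a, z) / law p Z z := by
  simp only [law_eq_sum_ite, condPmf, sum_div]
  refine sum_congr rfl fun ω _ => ?_
  by_cases hX : X ω = a <;> by_cases hZ : Z ω = z <;> simp [hX, hZ]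

lemma isProb_condPmf {p : Ω → ℝ} (hp : ∀ ω, 0 ≤ p ω) (Z : Ω → γ) {z : γ}
    (hz : law p Z z ≠ 0) : IsProb (condPmf p Z z) := by
  refine ⟨fun ω => ?_, ?_⟩
  · unfold condPmf
    split_ifs
    exacts [div_nonneg (hp ω) (law_nonneg hp Z z), le_rfl]
  · simp only [condPmf]
    rw [← sum_filter, ← sum_div]
    exact div_self hz

lemma ent_pair_eq_add_sum_condPmf [Fintype α] [Fintype γ] {p : Ω → ℝ} (hp : ∀ ω, 0 ≤ p ω)
    (X : Ω → α) (Z : Ω → γ) :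
    ent p (fun ω => (X ω, Z ω)) = ent p Z + ∑ z, law p Z z * ent (condPmf p Z z) X := by
  have hslice : ∀ z, law p Z z * ent (condPmf p Z z) X
      = law p Z z * Real.logb 2 (law p Z z)
        - ∑ a, law p (fun ω => (X ω, Z ω)) (a, z) *
            Real.logb 2 (law p (fun ω => (X ω, Z ω)) (a, z)) := by
    intro z
    have hmarg : law p Z z * Real.logb 2 (law p Z z)
        = ∑ a, law p (fun ω => (X ω, Z ω)) (a, z) * Real.logb 2 (law p Z z) := by
      rw [← sum_mul, ← law_snd]
    rw [hmarg, ent_eq_law, mul_neg, mul_sum, ← sum_neg_distrib, ← sum_sub_distrib]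
    refine sum_congr rfl fun a _ => ?_
    rw [law_condPmf]
    have hPz : law p (fun ω => (X ω, Z ω)) (a, z) ≤ law p Z z := by
      rw [law_snd p X Z z]
      exact single_le_sum (fun b _ => law_nonneg hp (fun ω => (X ω, Z ω)) (b, z)) (mem_univ a)
    rcases (law_nonneg hp (fun ω => (X ω, Z ω)) (a, z)).eq_or_lt with hP | hP
    · simp [← hP]
    · have hz : law p Z z ≠ 0 := (hP.trans_le hPz).ne'
      rw [Real.logb_div hP.ne' hz]
      field_simp
      ring
  simp only [hslice]
  simp only [sum_sub_distrib, ent_eq_law, Fintype.sum_prod_type]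
  rw [sum_comm (s := univ (α := α))]
  ring

lemma condMutInf_eq_sum_mutInf_condPmf [Fintype α] [Fintype β] [Fintype γ] {p : Ω → ℝ}
    (hp : ∀ ω, 0 ≤ p ω) (X : Ω → α) (Y : Ω → β) (Z : Ω → γ) :
    condMutInf p X Y Z = ∑ z, law p Z z * mutInf (condPmf p Z z) X Y := by
  have hassoc := ent_comp_injective p (fun ω => ((X ω, Y ω), Z ω))
    (e := fun x => (x.1.1, x.1.2, x.2)) fun x y h => by simp_all [Prod.ext_iff]
  unfold condMutInf mutInf
  rw [hassoc, ent_pair_eq_add_sum_condPmf hp X Z, ent_pair_eq_add_sum_condPmf hp Y Z,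
    ent_pair_eq_add_sum_condPmf hp (fun ω => (X ω, Y ω)) Z]
  simp only [mul_sub, mul_add, sum_sub_distrib, sum_add_distrib]
  ring

end Conditional

section LessNoisy

variable {𝒳 𝒴s 𝒴c : Type*} [Fintype 𝒳] [DecidableEq 𝒳] [Fintype 𝒴s] [DecidableEq 𝒴s]
  [Fintype 𝒴c] [DecidableEq 𝒴c]

/-- Körner–Marton order; an auxiliary `U` with `m` values is encoded in `Fin m`, and `μ` is the
joint law of `(U, X)`. -/
def LessNoisy (q : 𝒳 → 𝒴s → 𝒴c → ℝ) : Prop :=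
  ∀ (m : ℕ) (μ : Fin m → 𝒳 → ℝ), (∀ u x, 0 ≤ μ u x) → ∑ u : Fin m, ∑ x : 𝒳, μ u x = 1 →
    mutInf (fun ω : Fin m × 𝒳 × 𝒴s × 𝒴c => μ ω.1 ω.2.1 * q ω.2.1 ω.2.2.1 ω.2.2.2)
        (fun ω => ω.1) (fun ω => ω.2.2.2) ≤
      mutInf (fun ω : Fin m × 𝒳 × 𝒴s × 𝒴c => μ ω.1 ω.2.1 * q ω.2.1 ω.2.2.1 ω.2.2.2)
        (fun ω => ω.1) (fun ω => ω.2.2.1)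

lemma LessNoisy.mutInf_le {q : 𝒳 → 𝒴s → 𝒴c → ℝ} (hq : LessNoisy q)
    {Ω 𝒰 : Type*} [Fintype Ω] [Fintype 𝒰] [DecidableEq 𝒰] {p : Ω → ℝ} (hp : IsProb p)
    (U : Ω → 𝒰) (X : Ω → 𝒳) (Ys : Ω → 𝒴s) (Yc : Ω → 𝒴c)
    (hchannel : ∀ u x a b, law p (fun ω => ((U ω, X ω), (Ys ω, Yc ω))) ((u, x), (a, b))
      = law p (fun ω => (U ω, X ω)) (u, x) * q x a b) :
    mutInf p U Yc ≤ mutInf p U Ys := by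
  set e := Fintype.equivFin 𝒰
  set μ : Fin (Fintype.card 𝒰) → 𝒳 → ℝ := fun v x => law p (fun ω => (U ω, X ω)) (e.symm v, x)
  have hμ0 : ∀ v x, 0 ≤ μ v x := fun _ _ => law_nonneg hp.1 _ _
  have hμ1 : ∑ v, ∑ x, μ v x = 1 := by
    rw [e.symm.sum_comp (fun u => ∑ x, law p (fun ω => (U ω, X ω)) (u, x)),
      ← Fintype.sum_prod_type', sum_law, hp.2]
  set P : Fin (Fintype.card 𝒰) × 𝒳 × 𝒴s × 𝒴c → ℝ := fun ω => μ ω.1 ω.2.1 * q ω.2.1 ω.2.2.1 ω.2.2.2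
  set E : Fin (Fintype.card 𝒰) × 𝒳 × 𝒴s × 𝒴c → (𝒰 × 𝒳) × 𝒴s × 𝒴c :=
    fun ω => ((e.symm ω.1, ω.2.1), (ω.2.2.1, ω.2.2.2))
  have hE : Function.Injective E := fun ω ω' h => by simp_all [E, Prod.ext_iff]
  have hlaw : ∀ c, law p (fun ω => ((U ω, X ω), (Ys ω, Yc ω))) c = law P (fun ω => E ω) c := by
    rintro ⟨⟨u, x⟩, a, b⟩
    have hc : ((u, x), (a, b)) = E (e u, x, a, b) := by simp [E]
    rw [hc, law_comp_injective P (fun ω => ω) hE, law_self, ← hc, hchannel]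
    simp [P, μ]
  calc mutInf p U Yc = mutInf P (fun ω => ω.1) (fun ω => ω.2.2.2) := by
        rw [← mutInf_comp_injective_left P _ _ e.symm.injective]
        exact mutInf_comp_of_law_eq hlaw (fun c => c.1.1) (fun c => c.2.2)
    _ ≤ mutInf P (fun ω => ω.1) (fun ω => ω.2.2.1) := hq _ μ hμ0 hμ1
    _ = mutInf p U Ys := by
        rw [← mutInf_comp_injective_left P _ _ e.symm.injective]
        exact (mutInf_comp_of_law_eq hlaw (fun c => c.1.1) (fun c => c.2.1)).symm

end LessNoisy

section Memoryless

variable {M 𝒳 𝒴s 𝒴c : Type*} [Fintype M] [Fintype 𝒳] [Fintype 𝒴s] [Fintype 𝒴c] {n : ℕ}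

abbrev BlockSpace (M 𝒳 𝒴s 𝒴c : Type*) (n : ℕ) :=
  M × (Fin n → 𝒳) × (Fin n → 𝒴s) × (Fin n → 𝒴c)

/-- The law of a memoryless channel used without feedback, when `G` depends on the message and
the inputs only. -/
noncomputable def channelLaw (q : 𝒳 → 𝒴s → 𝒴c → ℝ) (G : BlockSpace M 𝒳 𝒴s 𝒴c n → ℝ)
    (ω : BlockSpace M 𝒳 𝒴s 𝒴c n) : ℝ :=
  G ω * ∏ t, q (ω.2.1 t) (ω.2.2.1 t) (ω.2.2.2 t)

def updateOutputs (k : Fin n) (a : 𝒴s) (b : 𝒴c) (ω : BlockSpace M 𝒳 𝒴s 𝒴c n) :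
    BlockSpace M 𝒳 𝒴s 𝒴c n :=
  (ω.1, ω.2.1, Function.update ω.2.2.1 k a, Function.update ω.2.2.2 k b)

def IgnoresOutputsAt {β : Type*} (k : Fin n) (F : BlockSpace M 𝒳 𝒴s 𝒴c n → β) : Prop :=
  ∀ ω a b, F (updateOutputs k a b ω) = F ω

lemma condPmf_channelLaw (q : 𝒳 → 𝒴s → 𝒴c → ℝ) (G : BlockSpace M 𝒳 𝒴s 𝒴c n → ℝ)
    {𝒵 : Type*} [DecidableEq 𝒵] (Z : BlockSpace M 𝒳 𝒴s 𝒴c n → 𝒵) (z : 𝒵) :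
    condPmf (channelLaw q G) Z z
      = channelLaw q (fun ω => if Z ω = z then G ω / law (channelLaw q G) Z z else 0) := by
  funext ω
  simp only [condPmf, channelLaw]
  split_ifs <;> ring

variable [DecidableEq 𝒴s] [DecidableEq 𝒴c]

lemma sum_ite_outputs_eq {k : Fin n} {F : BlockSpace M 𝒳 𝒴s 𝒴c n → ℝ}
    (hF : IgnoresOutputsAt k F) (a a' : 𝒴s) (b b' : 𝒴c) :
    ∑ ω, (if ω.2.2.1 k = a ∧ ω.2.2.2 k = b then F ω else 0)
      = ∑ ω, (if ω.2.2.1 k = a' ∧ ω.2.2.2 k = b' then F ω else 0) := by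
  set Φ : BlockSpace M 𝒳 𝒴s 𝒴c n → BlockSpace M 𝒳 𝒴s 𝒴c n :=
    fun ω => updateOutputs k (Equiv.swap a a' (ω.2.2.1 k)) (Equiv.swap b b' (ω.2.2.2 k)) ω
  have hΦ : Function.Involutive Φ := fun ω => by simp [Φ, updateOutputs]
  rw [← hΦ.bijective.sum_comp]
  refine sum_congr rfl fun ω _ => ?_
  rw [hF ω]
  simp [Φ, updateOutputs, Equiv.swap_apply_eq_iff]

lemma law_outputs_eq_mul_channel [DecidableEq 𝒳] {q : 𝒳 → 𝒴s → 𝒴c → ℝ}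
    (hq1 : ∀ x, ∑ a : 𝒴s, ∑ b : 𝒴c, q x a b = 1) {k : Fin n}
    {G : BlockSpace M 𝒳 𝒴s 𝒴c n → ℝ} (hG : IgnoresOutputsAt k G)
    {𝒲 : Type*} [DecidableEq 𝒲] {W : BlockSpace M 𝒳 𝒴s 𝒴c n → 𝒲} (hW : IgnoresOutputsAt k W)
    (w : 𝒲) (x : 𝒳) (a : 𝒴s) (b : 𝒴c) :
    law (channelLaw q G) (fun ω => ((W ω, ω.2.1 k), (ω.2.2.1 k, ω.2.2.2 k))) ((w, x), (a, b))
      = law (channelLaw q G) (fun ω => (W ω, ω.2.1 k)) (w, x) * q x a b := by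
  set F : BlockSpace M 𝒳 𝒴s 𝒴c n → ℝ := fun ω =>
    if (W ω, ω.2.1 k) = (w, x) then G ω * ∏ t ∈ univ.erase k, q (ω.2.1 t) (ω.2.2.1 t) (ω.2.2.2 t)
    else 0
  have hF : IgnoresOutputsAt k F := fun ω c d => by
    have hprod : ∀ t ∈ univ.erase k, q ((updateOutputs k c d ω).2.1 t)
        ((updateOutputs k c d ω).2.2.1 t) ((updateOutputs k c d ω).2.2.2 t)
          = q (ω.2.1 t) (ω.2.2.1 t) (ω.2.2.2 t) := fun t ht => by
      simp [updateOutputs, Function.update_of_ne (ne_of_mem_erase ht)]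
    simp only [F, hW ω c d, hG ω c d, prod_congr rfl hprod]
    rfl
  have hjoint : ∀ a b, law (channelLaw q G)
      (fun ω => ((W ω, ω.2.1 k), (ω.2.2.1 k, ω.2.2.2 k))) ((w, x), (a, b))
        = q x a b * ∑ ω, if ω.2.2.1 k = a ∧ ω.2.2.2 k = b then F ω else 0 := by
    intro a b
    rw [law_eq_sum_ite, mul_sum]
    refine sum_congr rfl fun ω _ => ?_
    simp only [channelLaw, F, Prod.mk.injEq]
    by_cases hab : ω.2.2.1 k = a ∧ ω.2.2.2 k = b
    · by_cases hwx : W ω = w ∧ ω.2.1 k = x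
      · rw [if_pos ⟨hwx, hab⟩, if_pos hab, if_pos hwx, ← mul_prod_erase univ _ (mem_univ k),
          hwx.2, hab.1, hab.2]
        ring
      · simp [hwx]
    · simp [hab]
  -- The mass left after factoring out `q x a b` does not depend on `(a, b)`.
  have hmarg : law (channelLaw q G) (fun ω => (W ω, ω.2.1 k)) (w, x)
      = ∑ ω, if ω.2.2.1 k = a ∧ ω.2.2.2 k = b then F ω else 0 := by
    rw [law_fst _ _ (fun ω => (ω.2.2.1 k, ω.2.2.2 k))]
    calc _ = ∑ c : 𝒴s × 𝒴c, q x c.1 c.2 *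
          ∑ ω, (if ω.2.2.1 k = a ∧ ω.2.2.2 k = b then F ω else 0) :=
          sum_congr rfl fun ⟨a', b'⟩ _ => by rw [hjoint, sum_ite_outputs_eq hF a' a b' b]
      _ = _ := by rw [← sum_mul, Fintype.sum_prod_type, hq1, one_mul]
  rw [hjoint, hmarg, mul_comm]

lemma condMutInf_outputs_le [DecidableEq 𝒳] {q : 𝒳 → 𝒴s → 𝒴c → ℝ} (hq : LessNoisy q)
    (hq0 : ∀ x a b, 0 ≤ q x a b) (hq1 : ∀ x, ∑ a : 𝒴s, ∑ b : 𝒴c, q x a b = 1) {k : Fin n}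
    {G : BlockSpace M 𝒳 𝒴s 𝒴c n → ℝ} (hG0 : ∀ ω, 0 ≤ G ω) (hG : IgnoresOutputsAt k G)
    {𝒰 𝒵 : Type*} [Fintype 𝒰] [DecidableEq 𝒰] [Fintype 𝒵] [DecidableEq 𝒵]
    {U : BlockSpace M 𝒳 𝒴s 𝒴c n → 𝒰} {Z : BlockSpace M 𝒳 𝒴s 𝒴c n → 𝒵}
    (hU : IgnoresOutputsAt k U) (hZ : IgnoresOutputsAt k Z) :
    condMutInf (channelLaw q G) (fun ω => ω.2.2.2 k) U Z
      ≤ condMutInf (channelLaw q G) (fun ω => ω.2.2.1 k) U Z := by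
  have hp : ∀ ω, 0 ≤ channelLaw q G ω := fun ω =>
    mul_nonneg (hG0 ω) (prod_nonneg fun t _ => hq0 _ _ _)
  rw [condMutInf_eq_sum_mutInf_condPmf hp, condMutInf_eq_sum_mutInf_condPmf hp]
  refine sum_le_sum fun z _ => ?_
  rcases eq_or_ne (law (channelLaw q G) Z z) 0 with hz | hz
  · simp [hz]
  refine mul_le_mul_of_nonneg_left ?_ (law_nonneg hp Z z)
  rw [mutInf_comm _ _ U, mutInf_comm _ _ U]
  have hGz : IgnoresOutputsAt k
      (fun ω => if Z ω = z then G ω / law (channelLaw q G) Z z else 0) := fun ω a b => by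
    simp only [hZ ω a b, hG ω a b]
  refine hq.mutInf_le (isProb_condPmf hp Z hz) U (fun ω => ω.2.1 k) _ _ fun u x a b => ?_
  rw [condPmf_channelLaw]
  exact law_outputs_eq_mul_channel hq1 hGz hU u x a b

end Memoryless

section Hybrid

variable {M 𝒳 𝒴s 𝒴c : Type*} {n : ℕ}

/-- `(Y_s^k, Y_{c,k+1}, …, Y_{c,i-1})`, indexed from `0`: the first `k` of the `i` letters
before time `i` are taken from `Y_s`, the remaining ones from `Y_c`. -/
def hybrid (i : Fin n) (k : ℕ) (ω : BlockSpace M 𝒳 𝒴s 𝒴c n) (t : Fin i) : 𝒴s ⊕ 𝒴c :=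
  if (t : ℕ) < k then .inl (ω.2.2.1 (Fin.castLE i.isLt.le t))
  else .inr (ω.2.2.2 (Fin.castLE i.isLt.le t))

lemma hybrid_zero (i : Fin n) (ω : BlockSpace M 𝒳 𝒴s 𝒴c n) :
    hybrid i 0 ω = Sum.inr ∘ fun t => ω.2.2.2 (Fin.castLE i.isLt.le t) := by
  funext t
  simp [hybrid]

lemma hybrid_self (i : Fin n) (ω : BlockSpace M 𝒳 𝒴s 𝒴c n) :
    hybrid i i ω = Sum.inl ∘ fun t => ω.2.2.1 (Fin.castLE i.isLt.le t) := by
  funext t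
  simp [hybrid]

lemma hybrid_succ_of_ne {i : Fin n} {k : ℕ} (ω : BlockSpace M 𝒳 𝒴s 𝒴c n) {t : Fin i}
    (ht : (t : ℕ) ≠ k) : hybrid i (k + 1) ω t = hybrid i k ω t := by
  have : (t : ℕ) < k + 1 ↔ (t : ℕ) < k := by omega
  simp only [hybrid, this]

variable [Fintype M] [Fintype 𝒳] [DecidableEq 𝒳] [Fintype 𝒴s] [DecidableEq 𝒴s] [Fintype 𝒴c]
  [DecidableEq 𝒴c]

lemma condMutInf_hybrid_le_succ {q : 𝒳 → 𝒴s → 𝒴c → ℝ} (hq : LessNoisy q)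
    (hq0 : ∀ x a b, 0 ≤ q x a b) (hq1 : ∀ x, ∑ a : 𝒴s, ∑ b : 𝒴c, q x a b = 1)
    {G : BlockSpace M 𝒳 𝒴s 𝒴c n → ℝ} (hG0 : ∀ ω, 0 ≤ G ω) (hG : ∀ k, IgnoresOutputsAt k G)
    {𝒵 : Type*} [Fintype 𝒵] [DecidableEq 𝒵] {Z : BlockSpace M 𝒳 𝒴s 𝒴c n → 𝒵}
    (hZ : ∀ k, IgnoresOutputsAt k Z) (i : Fin n) {k : ℕ} (hk : k < i) :
    condMutInf (channelLaw q G) (hybrid i k) (fun ω => ω.2.2.2 i) Z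
      ≤ condMutInf (channelLaw q G) (hybrid i (k + 1)) (fun ω => ω.2.2.2 i) Z := by
  set p := channelLaw q G
  set kf : Fin i := ⟨k, hk⟩
  set kn : Fin n := Fin.castLE i.isLt.le kf
  set split := (Equiv.funSplitAt kf (𝒴s ⊕ 𝒴c)).symm
  set W : BlockSpace M 𝒳 𝒴s 𝒴c n → ({t : Fin i // t ≠ kf} → 𝒴s ⊕ 𝒴c) :=
    fun ω t => hybrid i k ω t
  have hsplit_c : hybrid i k = fun ω => split (.inr (ω.2.2.2 kn), W ω) := by
    funext ω
    refine (Equiv.eq_symm_apply _).2 (Prod.ext ?_ rfl)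
    simp [hybrid, kf, kn]
  have hsplit_s : hybrid i (k + 1) = fun ω => split (.inl (ω.2.2.1 kn), W ω) := by
    funext ω
    refine (Equiv.eq_symm_apply _).2 (Prod.ext ?_ ?_)
    · simp [hybrid, kf, kn]
    · funext t
      exact hybrid_succ_of_ne ω fun h => t.2 (Fin.ext h)
  have hW : IgnoresOutputsAt kn W := fun ω a b => by
    funext t
    have ht : Fin.castLE i.isLt.le t.1 ≠ kn := fun h => t.2 (Fin.castLE_injective _ h)
    simp [W, hybrid, updateOutputs, Function.update_of_ne ht]
  have hY : IgnoresOutputsAt kn fun ω : BlockSpace M 𝒳 𝒴s 𝒴c n => ω.2.2.2 i := fun ω a b => by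
    have hi : i ≠ kn := fun h => hk.ne' (congrArg Fin.val h)
    simp [updateOutputs, Function.update_of_ne hi]
  have hWZ : IgnoresOutputsAt kn fun ω => (W ω, Z ω) := fun ω a b => by
    simp only [hW ω a b, hZ kn ω a b]
  calc condMutInf p (hybrid i k) (fun ω => ω.2.2.2 i) Z
      = condMutInf p W (fun ω => ω.2.2.2 i) Z
        + condMutInf p (fun ω => ω.2.2.2 kn) (fun ω => ω.2.2.2 i) fun ω => (W ω, Z ω) := by
        rw [hsplit_c, condMutInf_comp_injective_left _ _ _ _ split.injective,
          condMutInf_pair_left, condMutInf_comp_injective_left _ _ _ _ Sum.inr_injective]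
    _ ≤ condMutInf p W (fun ω => ω.2.2.2 i) Z
        + condMutInf p (fun ω => ω.2.2.1 kn) (fun ω => ω.2.2.2 i) fun ω => (W ω, Z ω) :=
        add_le_add le_rfl (condMutInf_outputs_le hq hq0 hq1 hG0 (hG kn) hY hWZ)
    _ = condMutInf p (hybrid i (k + 1)) (fun ω => ω.2.2.2 i) Z := by
        rw [hsplit_s, condMutInf_comp_injective_left _ _ _ _ split.injective,
          condMutInf_pair_left, condMutInf_comp_injective_left _ _ _ _ Sum.inl_injective]

lemma condMutInf_hybrid_zero_le {q : 𝒳 → 𝒴s → 𝒴c → ℝ} (hq : LessNoisy q)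
    (hq0 : ∀ x a b, 0 ≤ q x a b) (hq1 : ∀ x, ∑ a : 𝒴s, ∑ b : 𝒴c, q x a b = 1)
    {G : BlockSpace M 𝒳 𝒴s 𝒴c n → ℝ} (hG0 : ∀ ω, 0 ≤ G ω) (hG : ∀ k, IgnoresOutputsAt k G)
    {𝒵 : Type*} [Fintype 𝒵] [DecidableEq 𝒵] {Z : BlockSpace M 𝒳 𝒴s 𝒴c n → 𝒵}
    (hZ : ∀ k, IgnoresOutputsAt k Z) (i : Fin n) :
    ∀ k ≤ (i : ℕ), condMutInf (channelLaw q G) (hybrid i 0) (fun ω => ω.2.2.2 i) Z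
      ≤ condMutInf (channelLaw q G) (hybrid i k) (fun ω => ω.2.2.2 i) Z
  | 0, _ => le_rfl
  | k + 1, hk => (condMutInf_hybrid_zero_le hq hq0 hq1 hG0 hG hZ i k (by omega)).trans
      (condMutInf_hybrid_le_succ hq hq0 hq1 hG0 hG hZ i hk)

end Hybrid

end InfoTheory

open InfoTheory

theorem stmt_17_general
    (𝒳 𝒴s 𝒴c : Type) [Fintype 𝒳] [DecidableEq 𝒳]
    [Fintype 𝒴s] [DecidableEq 𝒴s] [Fintype 𝒴c] [DecidableEq 𝒴c]
    (q : 𝒳 → 𝒴s → 𝒴c → ℝ)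
    (hq0 : ∀ x ys yc, 0 ≤ q x ys yc)
    (hq1 : ∀ x, ∑ ys : 𝒴s, ∑ yc : 𝒴c, q x ys yc = 1)
    (hln : ∀ (m : ℕ) (μ : Fin m → 𝒳 → ℝ),
      (∀ u x, 0 ≤ μ u x) → (∑ u : Fin m, ∑ x : 𝒳, μ u x = 1) →
      mutInf (fun ω : Fin m × 𝒳 × 𝒴s × 𝒴c => μ ω.1 ω.2.1 * q ω.2.1 ω.2.2.1 ω.2.2.2)
          (fun ω => ω.1) (fun ω => ω.2.2.2) ≤
        mutInf (fun ω : Fin m × 𝒳 × 𝒴s × 𝒴c => μ ω.1 ω.2.1 * q ω.2.1 ω.2.2.1 ω.2.2.2)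
          (fun ω => ω.1) (fun ω => ω.2.2.1))
    (n : ℕ) (M : Type) [Fintype M] [DecidableEq M]
    (ν : M → (Fin n → 𝒳) → ℝ)
    (hν0 : ∀ msg x, 0 ≤ ν msg x)
    (i : Fin n) :
    condMutInf
        (fun ω : M × (Fin n → 𝒳) × (Fin n → 𝒴s) × (Fin n → 𝒴c) =>
          ν ω.1 ω.2.1 * ∏ t, q (ω.2.1 t) (ω.2.2.1 t) (ω.2.2.2 t))
        (fun ω => fun t : Fin (i : ℕ) => ω.2.2.2 ⟨(t : ℕ), Nat.lt_trans t.isLt i.isLt⟩)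
        (fun ω => ω.2.2.2 i)
        (fun ω => ω.1) ≤
      condMutInf
        (fun ω : M × (Fin n → 𝒳) × (Fin n → 𝒴s) × (Fin n → 𝒴c) =>
          ν ω.1 ω.2.1 * ∏ t, q (ω.2.1 t) (ω.2.2.1 t) (ω.2.2.2 t))
        (fun ω => fun t : Fin (i : ℕ) => ω.2.2.1 ⟨(t : ℕ), Nat.lt_trans t.isLt i.isLt⟩)
        (fun ω => ω.2.2.2 i)
        (fun ω => ω.1) := by
  set G : BlockSpace M 𝒳 𝒴s 𝒴c n → ℝ := fun ω => ν ω.1 ω.2.1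
  have hG : ∀ k, IgnoresOutputsAt k G := fun _ _ _ _ => rfl
  have hM : ∀ k, IgnoresOutputsAt k fun ω : BlockSpace M 𝒳 𝒴s 𝒴c n => ω.1 :=
    fun _ _ _ _ => rfl
  calc _ = condMutInf (channelLaw q G) (hybrid i 0) (fun ω => ω.2.2.2 i) (fun ω => ω.1) := by
        rw [funext (hybrid_zero i), condMutInf_comp_injective_left _ _ _ _
          Sum.inr_injective.comp_left]
        rfl
    _ ≤ condMutInf (channelLaw q G) (hybrid i i) (fun ω => ω.2.2.2 i) (fun ω => ω.1) :=
        condMutInf_hybrid_zero_le hln hq0 hq1 (fun ω => hν0 _ _) hG hM i i le_rfl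
    _ = _ := by
        rw [funext (hybrid_self i), condMutInf_comp_injective_left _ _ _ _
          Sum.inl_injective.comp_left]
        rfl

/-- Let `q` be a discrete memoryless broadcast channel
`p(y_s, y_c | x)` with receiver `Y_s` less noisy than `Y_c` (Körner–Marton:
`I(U;Y_s) ≥ I(U;Y_c)` for every auxiliary `U` and every joint law `p(u,x)`,
the outputs being generated from `X` through `q`).  For the channel used `n`
times without feedback with any message random variable `M` jointly distributed
with `X^n` (so `M ⊸ X^n ⊸ (Y_s^n, Y_c^n)`), one has for every `1 ≤ i ≤ n`:
`I(Y_s^{i-1}; Y_{c,i} | M) ≥ I(Y_c^{i-1}; Y_{c,i} | M)`. -/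
theorem stmt_17
    (𝒳 𝒴s 𝒴c : Type) [Fintype 𝒳] [DecidableEq 𝒳]
    [Fintype 𝒴s] [DecidableEq 𝒴s] [Fintype 𝒴c] [DecidableEq 𝒴c]
    (q : 𝒳 → 𝒴s → 𝒴c → ℝ)
    (hq0 : ∀ x ys yc, 0 ≤ q x ys yc)
    (hq1 : ∀ x, ∑ ys : 𝒴s, ∑ yc : 𝒴c, q x ys yc = 1)
    (hln : ∀ (m : ℕ) (μ : Fin m → 𝒳 → ℝ),
      (∀ u x, 0 ≤ μ u x) → (∑ u : Fin m, ∑ x : 𝒳, μ u x = 1) →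
      mutInf (fun ω : Fin m × 𝒳 × 𝒴s × 𝒴c => μ ω.1 ω.2.1 * q ω.2.1 ω.2.2.1 ω.2.2.2)
          (fun ω => ω.1) (fun ω => ω.2.2.2) ≤
        mutInf (fun ω : Fin m × 𝒳 × 𝒴s × 𝒴c => μ ω.1 ω.2.1 * q ω.2.1 ω.2.2.1 ω.2.2.2)
          (fun ω => ω.1) (fun ω => ω.2.2.1))
    (n : ℕ) (M : Type) [Fintype M] [DecidableEq M]
    (ν : M → (Fin n → 𝒳) → ℝ)
    (hν0 : ∀ msg x, 0 ≤ ν msg x) (hν1 : ∑ msg : M, ∑ x : Fin n → 𝒳, ν msg x = 1)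
    (i : Fin n) :
    condMutInf
        (fun ω : M × (Fin n → 𝒳) × (Fin n → 𝒴s) × (Fin n → 𝒴c) =>
          ν ω.1 ω.2.1 * ∏ t, q (ω.2.1 t) (ω.2.2.1 t) (ω.2.2.2 t))
        (fun ω => fun t : Fin (i : ℕ) => ω.2.2.2 ⟨(t : ℕ), Nat.lt_trans t.isLt i.isLt⟩)
        (fun ω => ω.2.2.2 i)
        (fun ω => ω.1) ≤
      condMutInf
        (fun ω : M × (Fin n → 𝒳) × (Fin n → 𝒴s) × (Fin n → 𝒴c) =>
          ν ω.1 ω.2.1 * ∏ t, q (ω.2.1 t) (ω.2.2.1 t) (ω.2.2.2 t))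
        (fun ω => fun t : Fin (i : ℕ) => ω.2.2.1 ⟨(t : ℕ), Nat.lt_trans t.isLt i.isLt⟩)
        (fun ω => ω.2.2.2 i)
        (fun ω => ω.1) :=
  stmt_17_general 𝒳 𝒴s 𝒴c q hq0 hq1 hln n M ν hν0 i
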